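/- Let g be the half-normal density with parameter σ > 0 (g(y) = (√2/(σ√π))·exp(−y²/(2σ²)) for y ≥ 0, g(y) = 0 for y < 0). For any 0 ≤ ε ≤ ε' ≤ 1, ∫₀^∞ |g(x − ε) − g(x − ε')| dx ≤ (2√2/(σ√π))·(ε' − ε). -/

import Mathlib

open Real MeasureTheory Set

/-!
Writing `g_d(y) = g(y - d)` with `d = ε' - ε`, the substitution `x = y + ε` and positivity of
the integrand bound the integral by `∫_ℝ |g - g_d|`. Since `g` vanishes on the negatives and
decreases on `[0, ∞)`, one has `|g - g_d| = g_d - g + 2 · 1_{[0,d)} g` pointwise; the first two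
terms have the same integral, so `∫_ℝ |g - g_d| = 2 ∫_0^d g ≤ 2 g(0) d`.
-/

section ShiftedDifference

variable {g : ℝ → ℝ}

lemma abs_sub_comp_sub_eq (hneg : ∀ y < 0, g y = 0) (hnonneg : ∀ y, 0 ≤ g y)
    (hanti : AntitoneOn g (Ici 0)) {d : ℝ} (hd : 0 ≤ d) (y : ℝ) :
    |g y - g (y - d)| = g (y - d) - g y + 2 * (Ico 0 d).indicator g y := by
  rcases lt_or_ge y 0 with hy | hy
  · simp [hneg y hy, hneg (y - d) (by linarith), indicator_of_notMem, hy.not_ge]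
  rcases lt_or_ge y d with hyd | hyd
  · rw [hneg (y - d) (by linarith), indicator_of_mem (show y ∈ Ico 0 d from ⟨hy, hyd⟩),
      sub_zero, abs_of_nonneg (hnonneg y)]
    ring
  · have hle : g y ≤ g (y - d) :=
      hanti (mem_Ici.2 (sub_nonneg.2 hyd)) (mem_Ici.2 hy) (sub_le_self y hd)
    rw [indicator_of_notMem (fun h => (not_lt.2 hyd) h.2), abs_of_nonpos (sub_nonpos.2 hle)]
    ring

lemma integral_abs_sub_comp_sub_le (hint : Integrable g) (hneg : ∀ y < 0, g y = 0)
    (hnonneg : ∀ y, 0 ≤ g y) (hanti : AntitoneOn g (Ici 0)) {d : ℝ} (hd : 0 ≤ d) :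
    ∫ y, |g y - g (y - d)| ≤ 2 * g 0 * d := by
  have hbound : ∀ y ∈ Ico 0 d, ‖g y‖ ≤ g 0 := fun y hy => by
    rw [Real.norm_of_nonneg (hnonneg y)]
    exact hanti self_mem_Ici hy.1 hy.1
  have hsegment : ∫ y in Ico 0 d, g y ≤ g 0 * d := by
    calc ∫ y in Ico 0 d, g y ≤ ‖∫ y in Ico 0 d, g y‖ := le_abs_self _
      _ ≤ g 0 * volume.real (Ico 0 d) :=
          norm_setIntegral_le_of_norm_le_const (by simp) hbound
      _ = g 0 * d := by simp [hd]
  have hshift := hint.comp_sub_right d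
  have hind : Integrable ((Ico 0 d).indicator g) := hint.indicator measurableSet_Ico
  simp_rw [abs_sub_comp_sub_eq hneg hnonneg hanti hd]
  rw [integral_add (f := fun y => g (y - d) - g y) (hshift.sub hint) (hind.const_mul 2),
    integral_sub hshift hint, integral_sub_right_eq_self, sub_self, zero_add, integral_const_mul,
    integral_indicator measurableSet_Ico]
  linarith

end ShiftedDifference

lemma antitoneOn_exp_neg_sq_div {s : ℝ} (hs : 0 ≤ s) :
    AntitoneOn (fun y : ℝ => exp (-(y ^ 2) / s)) (Ici 0) := by
  intro a ha b _ hab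
  have hsq : a ^ 2 ≤ b ^ 2 := pow_le_pow_left₀ ha hab 2
  exact exp_le_exp.2 (div_le_div_of_nonneg_right (neg_le_neg hsq) hs)

theorem halfnormal_two_shift_bound_general (σ : ℝ) (hσ : 0 < σ) (ε ε' : ℝ)
    (hεε' : ε ≤ ε')
    (g : ℝ → ℝ)
    (hg : ∀ y : ℝ, g y =
      if 0 ≤ y then Real.sqrt 2 / (σ * Real.sqrt π) * Real.exp (-(y ^ 2) / (2 * σ ^ 2)) else 0) :
    ∫ x in Set.Ioi (0 : ℝ), |g (x - ε) - g (x - ε')| ≤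
      2 * Real.sqrt 2 / (σ * Real.sqrt π) * (ε' - ε) := by
  set c := Real.sqrt 2 / (σ * Real.sqrt π)
  have hc : 0 ≤ c := by positivity
  have hg_eq : g = (Ici 0).indicator fun y => c * exp (-(y ^ 2) / (2 * σ ^ 2)) := by
    ext y; simp [hg, indicator_apply]
  have hint : Integrable g := by
    have hgauss := (integrable_exp_neg_mul_sq (b := 1 / (2 * σ ^ 2)) (by positivity)).const_mul c
    rw [hg_eq]
    refine (hgauss.congr (ae_of_all _ fun y => ?_)).indicator measurableSet_Ici
    simp only [neg_mul, one_div_mul_eq_div, neg_div]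
  have hanti : AntitoneOn g (Ici 0) := fun a ha b hb hab => by
    simpa [hg, ha.out, hb.out] using
      mul_le_mul_of_nonneg_left (antitoneOn_exp_neg_sq_div (by positivity) ha hb hab) hc
  have hnonneg : ∀ y, 0 ≤ g y := fun y => by rw [hg]; split_ifs <;> positivity
  have hneg : ∀ y < 0, g y = 0 := fun y hy => by simp [hg, hy.not_ge]
  have hg0 : g 0 = c := by simp [hg]
  calc ∫ x in Ioi 0, |g (x - ε) - g (x - ε')|
      ≤ ∫ x, |g (x - ε) - g (x - ε')| :=
        setIntegral_le_integral ((hint.comp_sub_right ε).sub (hint.comp_sub_right ε')).abs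
          (ae_of_all _ fun _ => abs_nonneg _)
    _ = ∫ y, |g y - g (y - (ε' - ε))| := by
        rw [← integral_add_right_eq_self _ ε]
        simp only [add_sub_cancel_right, sub_sub_eq_add_sub]
    _ ≤ 2 * g 0 * (ε' - ε) :=
        integral_abs_sub_comp_sub_le hint hneg hnonneg hanti (sub_nonneg.2 hεε')
    _ = 2 * c * (ε' - ε) := by rw [hg0]
    _ = _ := by ring

/-- For `0 ≤ ε ≤ ε' ≤ 1`, the `L¹` distance over `[0,∞)` of two shifted
half-normal densities is bounded by `(2√2/(σ√π))·(ε' − ε)`. -/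
theorem halfnormal_two_shift_bound (σ : ℝ) (hσ : 0 < σ) (ε ε' : ℝ)
    (hε : 0 ≤ ε) (hεε' : ε ≤ ε') (hε' : ε' ≤ 1)
    (g : ℝ → ℝ)
    (hg : ∀ y : ℝ, g y =
      if 0 ≤ y then Real.sqrt 2 / (σ * Real.sqrt π) * Real.exp (-(y ^ 2) / (2 * σ ^ 2)) else 0) :
    ∫ x in Set.Ioi (0 : ℝ), |g (x - ε) - g (x - ε')| ≤
      2 * Real.sqrt 2 / (σ * Real.sqrt π) * (ε' - ε) :=
  halfnormal_two_shift_bound_general σ hσ ε ε' hεε' g hg
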